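/- Let φ : (0,∞) → (0,∞) be convex and strictly decreasing with lim_{t→0⁺} φ(t) = ∞ and lim_{t→∞} φ(t) = 0. Let K, L be star bodies in ℝⁿ. Define the Orlicz dual mixed volume Ṽ_φ(K,L) = (1/n)∫_{S^{n-1}} φ(ρ(L,u)/ρ(K,u)) ρ(K,u)ⁿ dS(u). Then Ṽ_φ(K,L) ≥ V(K) · φ((V(L)/V(K))^{1/n}). If φ is strictly convex, equality holds if and only if K and L are dilates. -/

import Mathlib

/-!
Write `w = ρ_K ^ n` and `h = (ρ_L / ρ_K) ^ n`, so that `∫ h w = ∫ ρ_L ^ n` and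
`φ (ρ_L / ρ_K) = ψ h` with `ψ s = φ (s ^ (1 / n))`. Since `s ↦ s ^ (1 / n)` is concave and `φ` is
convex and decreasing, `ψ` is convex, and the inequality is Jensen's inequality for `ψ` and the
probability measure `w dσ / ∫ w dσ`. Integrating a supporting line of `ψ` at the mean
`t = V(L) / V(K)` proves it and leaves a nonnegative continuous gap. If `φ` is strictly convex,
equality forces the gap, hence `h - t`, to vanish everywhere, because the Hausdorff measure on the
sphere is finite and charges every nonempty open set.
-/

open MeasureTheory Metric Real Filter Set

/-- The surface (spherical) measure on the unit sphere `S^{n-1} ⊆ ℝⁿ`. -/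
noncomputable def sphereσ (n : ℕ) : Measure (sphere (0 : EuclideanSpace ℝ (Fin n)) 1) :=
  μH[(n : ℝ) - 1]

open Module
open scoped InnerProductSpace Topology

section SupportingLine
variable {S : Set ℝ} {f : ℝ → ℝ} {x y : ℝ}

lemma ConvexOn.add_rightDeriv_mul_sub_le (hf : ConvexOn ℝ S f) (hx : x ∈ interior S)
    (hy : y ∈ S) : f x + derivWithin f (Ioi x) x * (y - x) ≤ f y := by
  rcases lt_trichotomy y x with hyx | rfl | hxy
  · have h := (hf.slope_le_leftDeriv_of_mem_interior hy hx hyx).trans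
      (hf.leftDeriv_le_rightDeriv_of_mem_interior hx)
    rw [slope_def_field, div_le_iff₀ (sub_pos.2 hyx)] at h
    linarith
  · simp
  · have h := hf.rightDeriv_le_slope_of_mem_interior hx hy hxy
    rw [slope_def_field, le_div_iff₀ (sub_pos.2 hxy)] at h
    linarith

lemma StrictConvexOn.add_rightDeriv_mul_sub_lt (hf : StrictConvexOn ℝ S f)
    (hx : x ∈ interior S) (hy : y ∈ S) (hyx : y ≠ x) :
    f x + derivWithin f (Ioi x) x * (y - x) < f y := by
  rcases hyx.lt_or_gt with hyx | hxy
  · have h := (hf.slope_lt_leftDeriv hy (interior_subset hx) hyx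
      (hf.convexOn.differentiableWithinAt_Iio_of_mem_interior hx)).trans_le
      (hf.convexOn.leftDeriv_le_rightDeriv_of_mem_interior hx)
    rw [slope_def_field, div_lt_iff₀ (sub_pos.2 hyx)] at h
    linarith
  · have h := hf.rightDeriv_lt_slope (interior_subset hx) hy hxy
      (hf.convexOn.differentiableWithinAt_Ioi_of_mem_interior hx)
    rw [slope_def_field, lt_div_iff₀ (sub_pos.2 hxy)] at h
    linarith

end SupportingLine

section WeightedJensen
variable {X : Type*} [MeasurableSpace X] {μ : Measure X} {S : Set ℝ} {ψ : ℝ → ℝ} {h w : X → ℝ}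
  {t : ℝ}

lemma integral_map_sub_affine_mul (hwi : Integrable w μ)
    (hhwi : Integrable (fun x => h x * w x) μ) (hψwi : Integrable (fun x => ψ (h x) * w x) μ)
    (hmean : ∫ x, h x * w x ∂μ = t * ∫ x, w x ∂μ) (c : ℝ) :
    ∫ x, (ψ (h x) - (ψ t + c * (h x - t))) * w x ∂μ =
      ∫ x, ψ (h x) * w x ∂μ - (∫ x, w x ∂μ) * ψ t := by
  have hexp : (fun x => (ψ (h x) - (ψ t + c * (h x - t))) * w x) =
      fun x => ψ (h x) * w x - ((ψ t - c * t) * w x + c * (h x * w x)) := by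
    ext; ring
  have hlin : Integrable (fun x => (ψ t - c * t) * w x + c * (h x * w x)) μ :=
    (hwi.const_mul _).add (hhwi.const_mul _)
  rw [hexp, integral_sub hψwi hlin, integral_add (hwi.const_mul _) (hhwi.const_mul _),
    integral_const_mul, integral_const_mul, hmean]
  ring

theorem ConvexOn.integral_mul_map_le (hψ : ConvexOn ℝ S ψ) (ht : t ∈ interior S)
    (hh : ∀ x, h x ∈ S) (hw : ∀ x, 0 ≤ w x) (hwi : Integrable w μ)
    (hhwi : Integrable (fun x => h x * w x) μ) (hψwi : Integrable (fun x => ψ (h x) * w x) μ)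
    (hmean : ∫ x, h x * w x ∂μ = t * ∫ x, w x ∂μ) :
    (∫ x, w x ∂μ) * ψ t ≤ ∫ x, ψ (h x) * w x ∂μ := by
  have hgap (x : X) : 0 ≤ (ψ (h x) - (ψ t + derivWithin ψ (Ioi t) t * (h x - t))) * w x :=
    mul_nonneg (sub_nonneg.2 (hψ.add_rightDeriv_mul_sub_le ht (hh x))) (hw x)
  have := integral_nonneg_of_ae (μ := μ) (ae_of_all _ hgap)
  rw [integral_map_sub_affine_mul hwi hhwi hψwi hmean] at this
  linarith

theorem StrictConvexOn.ae_eq_of_integral_map_mul_eq (hψ : StrictConvexOn ℝ S ψ)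
    (ht : t ∈ interior S) (hh : ∀ x, h x ∈ S) (hw : ∀ x, 0 ≤ w x) (hwi : Integrable w μ)
    (hhwi : Integrable (fun x => h x * w x) μ) (hψwi : Integrable (fun x => ψ (h x) * w x) μ)
    (hmean : ∫ x, h x * w x ∂μ = t * ∫ x, w x ∂μ)
    (heq : ∫ x, ψ (h x) * w x ∂μ = (∫ x, w x ∂μ) * ψ t) :
    ∀ᵐ x ∂μ, w x ≠ 0 → h x = t := by
  set c := derivWithin ψ (Ioi t) t
  have hgap (x : X) : 0 ≤ (ψ (h x) - (ψ t + c * (h x - t))) * w x :=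
    mul_nonneg (sub_nonneg.2 (hψ.convexOn.add_rightDeriv_mul_sub_le ht (hh x))) (hw x)
  have hgapi : Integrable (fun x => (ψ (h x) - (ψ t + c * (h x - t))) * w x) μ :=
    (hψwi.sub ((hwi.const_mul (ψ t - c * t)).add (hhwi.const_mul c))).congr
      (ae_of_all _ fun x => by simp only [Pi.sub_apply, Pi.add_apply]; ring)
  have hgap0 : ∫ x, (ψ (h x) - (ψ t + c * (h x - t))) * w x ∂μ = 0 := by
    rw [integral_map_sub_affine_mul hwi hhwi hψwi hmean, heq, sub_self]
  filter_upwards [(integral_eq_zero_iff_of_nonneg hgap hgapi).1 hgap0] with x hx hwx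
  by_contra hne
  exact (mul_pos (sub_pos.2 (hψ.add_rightDeriv_mul_sub_lt ht (hh x) hne))
    ((hw x).lt_of_ne' hwx)).ne' hx

end WeightedJensen

lemma Real.image_rpow_Ioi {p : ℝ} (hp : p ≠ 0) : (fun s : ℝ => s ^ p) '' Ioi 0 = Ioi 0 := by
  refine Subset.antisymm (image_subset_iff.2 fun s hs => rpow_pos_of_pos hs p) fun y hy => ?_
  exact ⟨y ^ p⁻¹, rpow_pos_of_pos hy _, rpow_inv_rpow (le_of_lt hy) hp⟩

section
variable {φ : ℝ → ℝ} {p : ℝ}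

lemma ConvexOn.comp_rpow (hφ : ConvexOn ℝ (Ioi 0) φ) (hanti : AntitoneOn φ (Ioi 0))
    (hp₀ : 0 < p) (hp₁ : p ≤ 1) : ConvexOn ℝ (Ioi 0) (fun s => φ (s ^ p)) := by
  rw [← Real.image_rpow_Ioi hp₀.ne'] at hφ hanti
  exact hφ.comp_concaveOn ((Real.concaveOn_rpow hp₀.le hp₁).subset Ioi_subset_Ici_self
    (convex_Ioi 0)) hanti

lemma StrictConvexOn.comp_rpow (hφ : StrictConvexOn ℝ (Ioi 0) φ) (hanti : AntitoneOn φ (Ioi 0))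
    (hp₀ : 0 < p) (hp₁ : p ≤ 1) : StrictConvexOn ℝ (Ioi 0) (fun s => φ (s ^ p)) := by
  rw [← Real.image_rpow_Ioi hp₀.ne'] at hφ hanti
  exact hφ.comp_concaveOn ((Real.concaveOn_rpow hp₀.le hp₁).subset Ioi_subset_Ici_self
    (convex_Ioi 0)) hanti ((Real.rpow_left_injOn hp₀.ne').mono Ioi_subset_Ici_self)

end

section ContinuousJensen
variable {X : Type*} [TopologicalSpace X] [CompactSpace X] [MeasurableSpace X]
  [OpensMeasurableSpace X] {μ : Measure X} [IsFiniteMeasure μ] {ψ : ℝ → ℝ} {h w : X → ℝ}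

lemma Continuous.integrable_of_compactSpace {F : X → ℝ} (hF : Continuous F) : Integrable F μ :=
  hF.integrable_of_hasCompactSupport (.of_compactSpace F)

lemma Continuous.integral_pos_of_pos [Nonempty X] [μ.IsOpenPosMeasure] {F : X → ℝ}
    (hF : Continuous F) (hF0 : ∀ x, 0 < F x) : 0 < ∫ x, F x ∂μ :=
  integral_pos_of_integrable_nonneg_nonzero (x := Classical.arbitrary X) hF
    hF.integrable_of_compactSpace (fun x => (hF0 x).le) (hF0 _).ne'

theorem ConvexOn.integral_mul_map_integral_mul_div_le [Nonempty X] [μ.IsOpenPosMeasure]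
    (hψ : ConvexOn ℝ (Ioi 0) ψ) (hh : Continuous h) (hw : Continuous w) (hh0 : ∀ x, 0 < h x)
    (hw0 : ∀ x, 0 < w x) :
    (∫ x, w x ∂μ) * ψ ((∫ x, h x * w x ∂μ) / ∫ x, w x ∂μ) ≤ ∫ x, ψ (h x) * w x ∂μ := by
  have hA : 0 < ∫ x, w x ∂μ := hw.integral_pos_of_pos hw0
  have hB : 0 < ∫ x, h x * w x ∂μ :=
    (hh.mul hw).integral_pos_of_pos fun x => mul_pos (hh0 x) (hw0 x)
  refine hψ.integral_mul_map_le (by rw [interior_Ioi]; exact div_pos hB hA) hh0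
    (fun x => (hw0 x).le) hw.integrable_of_compactSpace (hh.mul hw).integrable_of_compactSpace
    (((hψ.continuousOn isOpen_Ioi).comp_continuous hh hh0).mul hw).integrable_of_compactSpace
    (div_mul_cancel₀ _ hA.ne').symm

theorem StrictConvexOn.eq_of_integral_map_mul_eq [Nonempty X] [μ.IsOpenPosMeasure]
    (hψ : StrictConvexOn ℝ (Ioi 0) ψ) (hh : Continuous h) (hw : Continuous w) (hh0 : ∀ x, 0 < h x)
    (hw0 : ∀ x, 0 < w x)
    (heq : ∫ x, ψ (h x) * w x ∂μ = (∫ x, w x ∂μ) * ψ ((∫ x, h x * w x ∂μ) / ∫ x, w x ∂μ)) :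
    h = fun _ => (∫ x, h x * w x ∂μ) / ∫ x, w x ∂μ := by
  have hA : 0 < ∫ x, w x ∂μ := hw.integral_pos_of_pos hw0
  have hB : 0 < ∫ x, h x * w x ∂μ :=
    (hh.mul hw).integral_pos_of_pos fun x => mul_pos (hh0 x) (hw0 x)
  have hae := hψ.ae_eq_of_integral_map_mul_eq (by rw [interior_Ioi]; exact div_pos hB hA) hh0
    (fun x => (hw0 x).le) hw.integrable_of_compactSpace (hh.mul hw).integrable_of_compactSpace
    (((hψ.convexOn.continuousOn isOpen_Ioi).comp_continuous hh hh0).mul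
      hw).integrable_of_compactSpace (div_mul_cancel₀ _ hA.ne').symm heq
  refine (hh.ae_eq_iff_eq μ continuous_const).1 ?_
  filter_upwards [hae] with x hx using hx (hw0 x).ne'

end ContinuousJensen

lemma integral_div_pow_mul_pow {X : Type*} [MeasurableSpace X] {μ : Measure X} {f g : X → ℝ}
    {n : ℕ} (hf0 : ∀ x, 0 < f x) :
    ∫ x, (g x / f x) ^ n * f x ^ n ∂μ = ∫ x, g x ^ n ∂μ := by
  congr 1 with x
  rw [div_pow, div_mul_cancel₀ _ (pow_pos (hf0 x) n).ne']

section DualMixedVolume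
variable {X : Type*} [TopologicalSpace X] [CompactSpace X] [Nonempty X] [MeasurableSpace X]
  [OpensMeasurableSpace X] {μ : Measure X} [IsFiniteMeasure μ] [μ.IsOpenPosMeasure]
  {n : ℕ} {φ : ℝ → ℝ} {f g : X → ℝ}

theorem integral_pow_mul_map_le_integral_map_div_mul_pow (hn : n ≠ 0) (hφ : ConvexOn ℝ (Ioi 0) φ)
    (hanti : AntitoneOn φ (Ioi 0)) (hf : Continuous f) (hg : Continuous g) (hf0 : ∀ x, 0 < f x)
    (hg0 : ∀ x, 0 < g x) :
    (∫ x, f x ^ n ∂μ) * φ (((∫ x, g x ^ n ∂μ) / ∫ x, f x ^ n ∂μ) ^ (n : ℝ)⁻¹) ≤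
      ∫ x, φ (g x / f x) * f x ^ n ∂μ := by
  have hq (x : X) : ((g x / f x) ^ n) ^ (n : ℝ)⁻¹ = g x / f x :=
    pow_rpow_inv_natCast (div_pos (hg0 x) (hf0 x)).le hn
  have hψ := hφ.comp_rpow hanti (by positivity) (Nat.cast_inv_le_one n)
  have := hψ.integral_mul_map_integral_mul_div_le (μ := μ) (h := fun x => (g x / f x) ^ n)
    (w := fun x => f x ^ n) ((hg.div hf fun x => (hf0 x).ne').pow n) (hf.pow n)
    (fun x => pow_pos (div_pos (hg0 x) (hf0 x)) n) (fun x => pow_pos (hf0 x) n)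
  simpa only [integral_div_pow_mul_pow hf0, hq] using this

theorem integral_map_div_mul_pow_eq_iff (hn : n ≠ 0) (hφ : StrictConvexOn ℝ (Ioi 0) φ)
    (hanti : AntitoneOn φ (Ioi 0)) (hf : Continuous f) (hg : Continuous g) (hf0 : ∀ x, 0 < f x)
    (hg0 : ∀ x, 0 < g x) :
    ∫ x, φ (g x / f x) * f x ^ n ∂μ =
        (∫ x, f x ^ n ∂μ) * φ (((∫ x, g x ^ n ∂μ) / ∫ x, f x ^ n ∂μ) ^ (n : ℝ)⁻¹) ↔
      ∃ c, 0 < c ∧ ∀ x, f x = c * g x := by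
  have hq (x : X) : ((g x / f x) ^ n) ^ (n : ℝ)⁻¹ = g x / f x :=
    pow_rpow_inv_natCast (div_pos (hg0 x) (hf0 x)).le hn
  constructor
  · intro heq
    have hψ := hφ.comp_rpow hanti (by positivity) (Nat.cast_inv_le_one n)
    have hconst := hψ.eq_of_integral_map_mul_eq (μ := μ) (h := fun x => (g x / f x) ^ n)
      (w := fun x => f x ^ n) ((hg.div hf fun x => (hf0 x).ne').pow n) (hf.pow n)
      (fun x => pow_pos (div_pos (hg0 x) (hf0 x)) n) (fun x => pow_pos (hf0 x) n)
      (by simpa only [integral_div_pow_mul_pow hf0, hq] using heq)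
    rw [integral_div_pow_mul_pow hf0] at hconst
    have hB : 0 < ∫ x, g x ^ n ∂μ := (hg.pow n).integral_pos_of_pos fun x => pow_pos (hg0 x) n
    have hA : 0 < ∫ x, f x ^ n ∂μ := (hf.pow n).integral_pos_of_pos fun x => pow_pos (hf0 x) n
    refine ⟨(((∫ x, g x ^ n ∂μ) / ∫ x, f x ^ n ∂μ) ^ (n : ℝ)⁻¹)⁻¹, by positivity, fun x => ?_⟩
    rw [← congrFun hconst x, hq, inv_div, div_mul_cancel₀ _ (hg0 x).ne']
  · rintro ⟨c, hc, hfg⟩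
    have hgf (x : X) : g x / f x = c⁻¹ := by
      rw [hfg x, div_mul_cancel_right₀ (hg0 x).ne']
    have hB : ∫ x, g x ^ n ∂μ = c⁻¹ ^ n * ∫ x, f x ^ n ∂μ := by
      rw [← integral_const_mul]
      congr 1 with x
      rw [hfg x, ← mul_pow, ← mul_assoc, inv_mul_cancel₀ hc.ne', one_mul]
    have hA : 0 < ∫ x, f x ^ n ∂μ := (hf.pow n).integral_pos_of_pos fun x => pow_pos (hf0 x) n
    simp only [hgf, integral_mul_const, hB, mul_div_cancel_right₀ _ hA.ne',
      pow_rpow_inv_natCast (inv_pos.2 hc).le hn, mul_comm]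

end DualMixedVolume

section SphereChart

variable {E : Type*} [NormedAddCommGroup E] [InnerProductSpace ℝ E]

noncomputable def sphereChart (v : E) (y : (ℝ ∙ v)ᗮ) : E := (y : E) + √(1 - ‖y‖ ^ 2) • v

lemma sphereChart_zero {v : E} : sphereChart v 0 = v := by simp [sphereChart]

lemma continuous_sphereChart (v : E) : Continuous (sphereChart v) := by
  unfold sphereChart; fun_prop

lemma contDiffAt_sphereChart_zero (v : E) : ContDiffAt ℝ 1 (sphereChart v) 0 := by
  refine (ℝ ∙ v)ᗮ.subtypeL.contDiff.contDiffAt.add (ContDiffAt.smul ?_ contDiffAt_const)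
  exact (contDiffAt_const.sub (contDiff_norm_sq ℝ).contDiffAt).sqrt (by simp)

lemma norm_sphereChart {v : E} (hv : ‖v‖ = 1) {y : (ℝ ∙ v)ᗮ} (hy : ‖y‖ ≤ 1) :
    ‖sphereChart v y‖ = 1 := by
  have hyv : ⟪(y : E), √(1 - ‖y‖ ^ 2) • v⟫_ℝ = 0 := by
    rw [inner_smul_right, real_inner_comm,
      Submodule.mem_orthogonal_singleton_iff_inner_right.mp y.2, mul_zero]
  have h1 : 0 ≤ 1 - ‖y‖ ^ 2 := by nlinarith [norm_nonneg y]
  have := norm_add_sq_eq_norm_sq_add_norm_sq_of_inner_eq_zero (y : E) _ hyv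
  rw [norm_smul, hv, Real.norm_of_nonneg (sqrt_nonneg _), mul_one, ← sq, ← sq, ← sq,
    sq_sqrt h1] at this
  rw [sphereChart, ← sq_eq_sq₀ (norm_nonneg _) zero_le_one, this, Submodule.coe_norm]
  ring

lemma orthogonalProjectionOnto_sphereChart (v : E) (y : (ℝ ∙ v)ᗮ) :
    (ℝ ∙ v)ᗮ.orthogonalProjectionOnto (sphereChart v y) = y := by
  simp [sphereChart, Submodule.orthogonalProjectionOnto_orthogonalComplement_singleton_eq_zero]

lemma sphereChart_orthogonalProjectionOnto {v x : E} (hv : ‖v‖ = 1) (hx : ‖x‖ = 1)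
    (hvx : 0 ≤ ⟪v, x⟫_ℝ) : sphereChart v ((ℝ ∙ v)ᗮ.orthogonalProjectionOnto x) = x := by
  have hP : ((ℝ ∙ v)ᗮ.orthogonalProjectionOnto x : E) = x - ⟪v, x⟫_ℝ • v := by
    simp [Submodule.starProjection_unit_singleton ℝ hv]
  have hnorm : ‖((ℝ ∙ v)ᗮ.orthogonalProjectionOnto x : E)‖ ^ 2 = 1 - ⟪v, x⟫_ℝ ^ 2 := by
    rw [hP, norm_sub_sq_real, hx, inner_smul_right, norm_smul, hv, real_inner_comm]
    simp only [norm_eq_abs, mul_one, sq_abs]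
    ring
  rw [sphereChart, Submodule.coe_norm, hnorm, sub_sub_cancel, sqrt_sq hvx, hP, sub_add_cancel]

lemma finrank_orthogonal_span_singleton_eq_sub_one [FiniteDimensional ℝ E] {v : E}
    (hv : v ≠ 0) : (finrank ℝ (ℝ ∙ v)ᗮ : ℝ) = finrank ℝ E - 1 := by
  have := Submodule.finrank_add_finrank_orthogonal (ℝ ∙ v)
  rw [finrank_span_singleton hv] at this
  rw [← this]; push_cast; ring

section Measure
variable [FiniteDimensional ℝ E] [MeasurableSpace E] [BorelSpace E]

-- Near `v` the sphere is the image under `sphereChart v` of a bounded subset of `vᗮ` on which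
-- the chart is Lipschitz.
lemma hausdorffMeasure_sphere_finiteAtNhds (x : sphere (0 : E) 1) :
    (μH[(finrank ℝ E : ℝ) - 1] : Measure (sphere (0 : E) 1)).FiniteAtFilter (𝓝 x) := by
  obtain ⟨v, hv⟩ := x
  rw [mem_sphere_zero_iff_norm] at hv
  have hd :=
    (finrank_orthogonal_span_singleton_eq_sub_one (norm_ne_zero_iff.1 (hv ▸ one_ne_zero))).symm
  have hd0 : 0 ≤ (finrank ℝ E : ℝ) - 1 := hd ▸ Nat.cast_nonneg _
  set P := (ℝ ∙ v)ᗮ.orthogonalProjectionOnto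
  obtain ⟨K, t, ht, hK⟩ := (contDiffAt_sphereChart_zero v).exists_lipschitzOnWith
  set N : Set (sphere (0 : E) 1) :=
    {x | 0 < ⟪v, (x : E)⟫_ℝ} ∩ (fun x : sphere (0 : E) 1 => P x) ⁻¹' interior t
  have hN : N ∈ 𝓝 ⟨v, mem_sphere_zero_iff_norm.2 hv⟩ := by
    have hPv : P v = 0 :=
      Submodule.orthogonalProjectionOnto_orthogonalComplement_singleton_eq_zero v
    refine IsOpen.mem_nhds ?_ ⟨by simp [hv], ?_⟩
    · exact (isOpen_lt continuous_const (continuous_const.inner continuous_subtype_val)).inter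
        (isOpen_interior.preimage (P.continuous.comp continuous_subtype_val))
    · simpa [hPv] using mem_interior_iff_mem_nhds.2 ht
  have hsub : (↑) '' N ⊆ sphereChart v '' (t ∩ closedBall 0 1) := by
    rintro _ ⟨x, ⟨hvx, hPx⟩, rfl⟩
    have hx : ‖(x : E)‖ = 1 := norm_eq_of_mem_sphere x
    refine ⟨P x, ⟨interior_subset hPx, ?_⟩, sphereChart_orthogonalProjectionOnto hv hx hvx.le⟩
    exact mem_closedBall_zero_iff.2
      (((ℝ ∙ v)ᗮ.norm_orthogonalProjectionOnto_apply_le x).trans hx.le)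
  refine ⟨N, hN, ?_⟩
  rw [← isometry_subtype_coe.hausdorffMeasure_image (Or.inl hd0)]
  refine (measure_mono hsub).trans_lt <|
    ((hK.mono inter_subset_left).hausdorffMeasure_image_le hd0).trans_lt ?_
  refine ENNReal.mul_lt_top (ENNReal.rpow_lt_top_of_nonneg hd0 ENNReal.coe_ne_top) ?_
  rw [hd]
  exact (measure_mono inter_subset_right).trans_lt (isCompact_closedBall _ _).measure_lt_top

theorem isFiniteMeasure_hausdorffMeasure_sphere :
    IsFiniteMeasure (μH[(finrank ℝ E : ℝ) - 1] : Measure (sphere (0 : E) 1)) :=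
  have : IsLocallyFiniteMeasure (μH[(finrank ℝ E : ℝ) - 1] : Measure (sphere (0 : E) 1)) :=
    ⟨hausdorffMeasure_sphere_finiteAtNhds⟩
  CompactSpace.isFiniteMeasure

-- The `1`-Lipschitz projection onto `vᗮ` maps a neighbourhood of `v` in the sphere onto a set
-- containing a neighbourhood of `0`, which has positive Haar measure.
theorem isOpenPosMeasure_hausdorffMeasure_sphere :
    (μH[(finrank ℝ E : ℝ) - 1] : Measure (sphere (0 : E) 1)).IsOpenPosMeasure := by
  refine ⟨fun U hU ⟨⟨v, hv⟩, hvU⟩ => ?_⟩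
  obtain ⟨O, hO, rfl⟩ := isOpen_induced_iff.mp hU
  rw [mem_sphere_zero_iff_norm] at hv
  have hd :=
    (finrank_orthogonal_span_singleton_eq_sub_one (norm_ne_zero_iff.1 (hv ▸ one_ne_zero))).symm
  have hd0 : 0 ≤ (finrank ℝ E : ℝ) - 1 := hd ▸ Nat.cast_nonneg _
  set T : Set (ℝ ∙ v)ᗮ := ball 0 1 ∩ sphereChart v ⁻¹' O
  have hT : IsOpen T := isOpen_ball.inter (hO.preimage (continuous_sphereChart v))
  have h0T : (0 : (ℝ ∙ v)ᗮ) ∈ T := ⟨mem_ball_self one_pos, by simpa [sphereChart_zero] using hvU⟩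
  have hTsub : T ⊆ (ℝ ∙ v)ᗮ.orthogonalProjectionOnto ''
      (((↑) : sphere (0 : E) 1 → E) '' (((↑) : sphere (0 : E) 1 → E) ⁻¹' O)) := by
    rintro y ⟨hy1, hyO⟩
    have hy : sphereChart v y ∈ sphere (0 : E) 1 :=
      mem_sphere_zero_iff_norm.2 (norm_sphereChart hv (mem_ball_zero_iff.1 hy1).le)
    exact ⟨_, ⟨⟨_, hy⟩, hyO, rfl⟩, orthogonalProjectionOnto_sphereChart v y⟩
  refine ne_of_gt ?_
  rw [← isometry_subtype_coe.hausdorffMeasure_image (Or.inl hd0)]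
  calc 0 < μH[(finrank ℝ E : ℝ) - 1] T := by rw [hd]; exact hT.measure_pos _ ⟨0, h0T⟩
    _ ≤ _ := measure_mono hTsub
    _ ≤ _ := by
      simpa using ((ℝ ∙ v)ᗮ.lipschitzWith_orthogonalProjectionOnto).hausdorffMeasure_image_le hd0 _

end Measure

end SphereChart

theorem orlicz_dual_minkowski_general
    (n : ℕ) (hn : 0 < n)
    (φ : ℝ → ℝ)
    (hφconv : ConvexOn ℝ (Ioi 0) φ)
    (hφanti : StrictAntiOn φ (Ioi 0))
    (ρK ρL : sphere (0 : EuclideanSpace ℝ (Fin n)) 1 → ℝ)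
    (hKc : Continuous ρK) (hLc : Continuous ρL)
    (hKpos : ∀ u, 0 < ρK u) (hLpos : ∀ u, 0 < ρL u)
    (Vφ VK VL : ℝ)
    (hVφ : Vφ = (1 / n) * ∫ u, φ (ρL u / ρK u) * (ρK u) ^ (n : ℕ) ∂(sphereσ n))
    (hVK : VK = (1 / n) * ∫ u, (ρK u) ^ (n : ℕ) ∂(sphereσ n))
    (hVL : VL = (1 / n) * ∫ u, (ρL u) ^ (n : ℕ) ∂(sphereσ n)) :
    Vφ ≥ VK * φ ((VL / VK) ^ ((n : ℝ)⁻¹)) ∧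
      (StrictConvexOn ℝ (Ioi 0) φ →
        (Vφ = VK * φ ((VL / VK) ^ ((n : ℝ)⁻¹)) ↔
          ∃ c : ℝ, 0 < c ∧ ∀ u, ρK u = c * ρL u)) := by
  have hσ : sphereσ n = μH[(finrank ℝ (EuclideanSpace ℝ (Fin n)) : ℝ) - 1] := by
    rw [sphereσ, finrank_euclideanSpace_fin]
  have : IsFiniteMeasure (sphereσ n) := hσ ▸ isFiniteMeasure_hausdorffMeasure_sphere
  have : (sphereσ n).IsOpenPosMeasure := hσ ▸ isOpenPosMeasure_hausdorffMeasure_sphere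
  have : Nonempty (sphere (0 : EuclideanSpace ℝ (Fin n)) 1) :=
    ⟨⟨EuclideanSpace.single ⟨0, hn⟩ 1, by simp⟩⟩
  have hn' : (0 : ℝ) < 1 / n := one_div_pos.2 (Nat.cast_pos.2 hn)
  have hratio : VL / VK = (∫ u, ρL u ^ n ∂sphereσ n) / ∫ u, ρK u ^ n ∂sphereσ n := by
    rw [hVL, hVK, mul_div_mul_left _ _ hn'.ne']
  rw [hratio, hVφ, hVK, mul_assoc, ge_iff_le]
  refine ⟨mul_le_mul_of_nonneg_left (integral_pow_mul_map_le_integral_map_div_mul_pow hn.ne' hφconv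
    hφanti.antitoneOn hKc hLc hKpos hLpos) hn'.le, fun hstrict => ?_⟩
  rw [mul_right_inj' hn'.ne']
  exact integral_map_div_mul_pow_eq_iff hn.ne' hstrict hφanti.antitoneOn hKc hLc hKpos hLpos

/-- The Orlicz dual Minkowski inequality:
`Ṽ_φ(K,L) ≥ V(K)·φ((V(L)/V(K))^{1/n})`; if `φ` is strictly convex, equality holds
iff `K` and `L` are dilates. -/
theorem orlicz_dual_minkowski
    (n : ℕ) (hn : 0 < n)
    (φ : ℝ → ℝ)
    (hφconv : ConvexOn ℝ (Ioi 0) φ)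
    (hφanti : StrictAntiOn φ (Ioi 0))
    (hφpos : ∀ t ∈ Ioi (0 : ℝ), 0 < φ t)
    (hφ0 : Tendsto φ (nhdsWithin 0 (Ioi 0)) atTop)
    (hφtop : Tendsto φ atTop (nhds 0))
    (ρK ρL : sphere (0 : EuclideanSpace ℝ (Fin n)) 1 → ℝ)
    (hKc : Continuous ρK) (hLc : Continuous ρL)
    (hKpos : ∀ u, 0 < ρK u) (hLpos : ∀ u, 0 < ρL u)
    (Vφ VK VL : ℝ)
    (hVφ : Vφ = (1 / n) * ∫ u, φ (ρL u / ρK u) * (ρK u) ^ (n : ℕ) ∂(sphereσ n))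
    (hVK : VK = (1 / n) * ∫ u, (ρK u) ^ (n : ℕ) ∂(sphereσ n))
    (hVL : VL = (1 / n) * ∫ u, (ρL u) ^ (n : ℕ) ∂(sphereσ n)) :
    Vφ ≥ VK * φ ((VL / VK) ^ ((n : ℝ)⁻¹)) ∧
      (StrictConvexOn ℝ (Ioi 0) φ →
        (Vφ = VK * φ ((VL / VK) ^ ((n : ℝ)⁻¹)) ↔
          ∃ c : ℝ, 0 < c ∧ ∀ u, ρK u = c * ρL u)) :=
  orlicz_dual_minkowski_general n hn φ hφconv hφanti ρK ρL hKc hLc hKpos hLpos Vφ VK VL hVφ hVK hVL
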